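/- Let λ₁,…,λ_k be pairwise distinct nonzero complex numbers with |λ_i| < 1. Define C_j = λ_j^{k-1} ∏_{ℓ≠j} (1-λ_ℓ²)/((λ_j-λ_ℓ)(1-λ_jλ_ℓ)). Then ∑_{j=1}^k C_j = B_0 = ∑_{m₁+⋯+m_k=0} ∏_i λ_i^{|m_i|}; in particular ∑_{j=1}^k C_j is the S = 0 value of the sum and hence a symmetric function of λ₁,…,λ_k. -/

import Mathlib

/-!
Write `B_n` for the sum of `∏ λ_i ^ |m_i|` over the integer vectors with `∑ m_i = n`. The claim is
the case `n = 0` of `B_n = ∑_j C_j λ_j ^ |n|`, proved for all `n` by induction on `k`. Splitting off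
the coordinate `m_i` writes `B_n` as the convolution of `T ↦ λ_i ^ |T|` with the `B_T` of the other
`k - 1` numbers, and the convolution of two such two-sided geometric sequences is an explicit
combination of `λ_i ^ |n|` and `λ_j ^ |n|`. This gives `B_n = ∑_j c_j λ_j ^ |n|` with `c_j = C_j`
for `j ≠ i` and an unidentified `c_i`. Doing this for two different `i` and comparing
coefficients (the sequences `n ↦ λ_j ^ n` are linearly independent, by Vandermonde) identifies
`c_i = C_i`.
-/

open Finset

lemma summable_pow_natAbs {r : ℝ} (h0 : 0 ≤ r) (h1 : r < 1) :
    Summable fun T : ℤ => r ^ T.natAbs := by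
  rw [summable_int_iff_summable_nat_and_neg]
  simpa using summable_geometric_of_lt_one h0 h1

lemma summable_pi_prod_of_nonneg {ι β : Type*} [Fintype ι] {f : ι → β → ℝ}
    (hf0 : ∀ i b, 0 ≤ f i b) (hf : ∀ i, Summable (f i)) :
    Summable fun m : ι → β => ∏ i, f i (m i) := by
  classical
  refine summable_of_sum_le (c := ∏ i, ∑' b, f i b)
    (fun m => prod_nonneg fun i _ => hf0 i _) fun u => ?_
  calc ∑ m ∈ u, ∏ i, f i (m i)
      ≤ ∑ m ∈ Fintype.piFinset fun i => u.image (· i), ∏ i, f i (m i) :=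
        sum_le_sum_of_subset_of_nonneg (fun m hm => Fintype.mem_piFinset.2 fun i =>
          mem_image_of_mem _ hm) fun m _ _ => prod_nonneg fun i _ => hf0 i _
    _ = ∏ i, ∑ b ∈ u.image (· i), f i b := (prod_univ_sum _ _).symm
    _ ≤ ∏ i, ∑' b, f i b :=
        prod_le_prod (fun i _ => sum_nonneg fun b _ => hf0 i b)
          fun i _ => (hf i).sum_le_tsum _ fun b _ => hf0 i b

section NormedField

variable {𝕜 : Type*} [NormedField 𝕜]

lemma summable_prod_norm_pow_natAbs {ι : Type*} [Fintype ι] {lam : ι → 𝕜}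
    (hlam : ∀ i, ‖lam i‖ < 1) :
    Summable fun m : ι → ℤ => ∏ i, ‖lam i‖ ^ (m i).natAbs := by
  apply summable_pi_prod_of_nonneg (f := fun i (t : ℤ) => ‖lam i‖ ^ t.natAbs)
  · intro i t
    positivity
  · exact fun i => summable_pow_natAbs (norm_nonneg _) (hlam i)

lemma norm_mul_lt_one {a b : 𝕜} (ha : ‖a‖ < 1) (hb : ‖b‖ < 1) : ‖a * b‖ < 1 := by
  rw [norm_mul]
  exact mul_lt_one_of_nonneg_of_lt_one_left (norm_nonneg _) ha hb.le

lemma one_sub_mul_ne_zero {a b : 𝕜} (ha : ‖a‖ < 1) (hb : ‖b‖ < 1) : 1 - a * b ≠ 0 := by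
  refine sub_ne_zero.2 fun h => ?_
  simpa [← h] using norm_mul_lt_one ha hb

/-- The coefficient of `a ^ |n|` in `∑_T a ^ |T| * b ^ |n - T|`. -/
def pairCoeff (a b : 𝕜) : 𝕜 := a * (1 - b ^ 2) / ((a - b) * (1 - a * b))

/-- The paper's `C_j`, written as a product of pair coefficients. -/
def fiberSumCoeff {k : ℕ} (lam : Fin k → 𝕜) (j : Fin k) : 𝕜 :=
  ∏ l ∈ univ.erase j, pairCoeff (lam j) (lam l)

lemma fiberSumCoeff_eq {k : ℕ} (lam : Fin k → 𝕜) (j : Fin k) :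
    fiberSumCoeff lam j = lam j ^ (k - 1) *
      ∏ l ∈ univ.erase j, (1 - lam l ^ 2) / ((lam j - lam l) * (1 - lam j * lam l)) := by
  simp only [fiberSumCoeff, pairCoeff, mul_div_assoc, prod_mul_distrib, prod_const,
    card_erase_of_mem (mem_univ j), card_univ, Fintype.card_fin]

lemma fiberSumCoeff_succAbove {k : ℕ} (lam : Fin (k + 1) → 𝕜) (i : Fin (k + 1)) (j : Fin k) :
    fiberSumCoeff lam (i.succAbove j)
      = fiberSumCoeff (i.removeNth lam) j * pairCoeff (lam (i.succAbove j)) (lam i) := by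
  rw [fiberSumCoeff, Fin.univ_succAbove k i, erase_cons_of_ne _ (i.succAbove_ne j).symm,
    prod_cons, ← Fin.coe_succAboveEmb, ← map_erase, prod_map, fiberSumCoeff, mul_comm]
  rfl

lemma eq_of_forall_sum_mul_pow_eq {k : ℕ} {lam : Fin k → 𝕜} (hlam : Function.Injective lam)
    {c d : Fin k → 𝕜} (h : ∀ n : ℕ, ∑ j, c j * lam j ^ n = ∑ j, d j * lam j ^ n) : c = d := by
  have hvan : Matrix.vecMul (c - d) (Matrix.vandermonde lam) = 0 := funext fun n => by
    simp [Matrix.vecMul, dotProduct, sub_mul, sum_sub_distrib, h]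
  exact sub_eq_zero.1 (Matrix.eq_zero_of_vecMul_eq_zero
    (Matrix.det_vandermonde_ne_zero_iff.2 hlam) hvan)

lemma eq_of_forall_sum_update_mul_pow_eq {k : ℕ} {lam : Fin k → 𝕜}
    (hlam : Function.Injective lam) {c : Fin k → 𝕜} {i₀ i₁ : Fin k} (hi : i₀ ≠ i₁) {a₀ a₁ : 𝕜}
    (h : ∀ n : ℕ, ∑ l, Function.update c i₀ a₀ l * lam l ^ n
      = ∑ l, Function.update c i₁ a₁ l * lam l ^ n) : a₀ = c i₀ := by
  simpa [hi] using congrFun (eq_of_forall_sum_mul_pow_eq hlam h) i₀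

/-- The paper's `B_n`. -/
noncomputable def fiberSum {ι : Type*} [Fintype ι] (lam : ι → 𝕜) (n : ℤ) : 𝕜 :=
  ∑' m : {f : ι → ℤ // ∑ i, f i = n}, ∏ i, lam i ^ (m.1 i).natAbs

lemma fiberSum_fin_one (lam : Fin 1 → 𝕜) (n : ℤ) : fiberSum lam n = lam 0 ^ n.natAbs := by
  rw [fiberSum, tsum_eq_single ⟨fun _ => n, by simp⟩]
  · simp
  · refine fun m hm => absurd (Subtype.ext (funext fun i => ?_)) hm
    simpa [Subsingleton.elim i 0] using m.2

def insertNthFiberEquiv {k : ℕ} (i : Fin (k + 1)) (n : ℤ) :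
    (Fin k → ℤ) ≃ {f : Fin (k + 1) → ℤ // ∑ j, f j = n} where
  toFun m := ⟨i.insertNth (n - ∑ j, m j) m, by simp [Fin.sum_univ_succAbove _ i]⟩
  invFun f := i.removeNth f.1
  left_inv m := by simp
  right_inv := by
    rintro ⟨f, hsum⟩
    have hf : f i = n - ∑ j, i.removeNth f j := by
      rw [← hsum, Fin.sum_univ_succAbove _ i]
      simp [Fin.removeNth]
    ext1
    simp [← hf]

variable [CompleteSpace 𝕜]

lemma summable_pow_natAbs_mul_pow_natAbs_sub {a b : 𝕜} (ha : ‖a‖ < 1) (hb : ‖b‖ < 1) (n : ℤ) :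
    Summable fun T : ℤ => a ^ T.natAbs * b ^ (n - T).natAbs := by
  refine Summable.of_norm_bounded (summable_pow_natAbs (norm_nonneg a) ha) fun T => ?_
  rw [norm_mul, norm_pow, norm_pow]
  exact mul_le_of_le_one_right (by positivity) (pow_le_one₀ (norm_nonneg _) hb.le)

lemma tsum_pow_natAbs_mul_pow_natAbs_sub_natCast {a b : 𝕜} (ha : ‖a‖ < 1) (hb : ‖b‖ < 1)
    (hab : a ≠ b) (n : ℕ) :
    ∑' T : ℤ, a ^ T.natAbs * b ^ (n - T).natAbs
      = pairCoeff a b * a ^ n + pairCoeff b a * b ^ n := by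
  have hgeom := tsum_geometric_of_norm_lt_one (norm_mul_lt_one ha hb)
  -- split `ℤ` into `T < 0`, `0 ≤ T ≤ n` and `n < T`
  have hneg (t : ℕ) : a ^ (-(t + 1 : ℤ)).natAbs * b ^ (n - -(t + 1 : ℤ)).natAbs
      = b ^ n * (a * b) * (a * b) ^ t := by
    rw [show (-(t + 1 : ℤ)).natAbs = t + 1 by omega,
      show (n - -(t + 1 : ℤ)).natAbs = n + (t + 1) by omega]
    ring
  have htail (t : ℕ) :
      a ^ ((t + (n + 1) : ℕ) : ℤ).natAbs * b ^ (n - (t + (n + 1) : ℕ) : ℤ).natAbs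
        = a ^ n * (a * b) * (a * b) ^ t := by
    rw [Int.natAbs_natCast, show (n - (t + (n + 1) : ℕ) : ℤ).natAbs = t + 1 by omega]
    ring
  have hhead : ∑ t ∈ range (n + 1), a ^ (t : ℤ).natAbs * b ^ (n - t : ℤ).natAbs
      = (a ^ (n + 1) - b ^ (n + 1)) / (a - b) := by
    rw [eq_div_iff (sub_ne_zero.2 hab), ← geom_sum₂_mul]
    refine congrArg (· * _) (sum_congr rfl fun t ht => ?_)
    rw [Int.natAbs_natCast, show (n - t : ℤ).natAbs = n + 1 - 1 - t by
      have := mem_range.1 ht; omega]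
  have hpos : Summable fun t : ℕ => a ^ (t : ℤ).natAbs * b ^ (n - t : ℤ).natAbs :=
    (summable_pow_natAbs_mul_pow_natAbs_sub ha hb n).comp_injective Nat.cast_injective
  have hnegs :
      Summable fun t : ℕ => a ^ (-(t + 1 : ℤ)).natAbs * b ^ (n - -(t + 1 : ℤ)).natAbs := by
    simp only [hneg]
    exact (summable_geometric_of_norm_lt_one (norm_mul_lt_one ha hb)).mul_left _
  rw [tsum_of_nat_of_neg_add_one (f := fun T : ℤ => a ^ T.natAbs * b ^ (n - T).natAbs)
    hpos hnegs, ← hpos.sum_add_tsum_nat_add (n + 1)]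
  simp only [hneg, htail, tsum_mul_left, hgeom, hhead, pairCoeff]
  field_simp [one_sub_mul_ne_zero ha hb, sub_ne_zero.2 hab, sub_ne_zero.2 hab.symm]
  ring

lemma tsum_pow_natAbs_mul_pow_natAbs_sub {a b : 𝕜} (ha : ‖a‖ < 1) (hb : ‖b‖ < 1)
    (hab : a ≠ b) (n : ℤ) :
    ∑' T : ℤ, a ^ T.natAbs * b ^ (n - T).natAbs
      = pairCoeff a b * a ^ n.natAbs + pairCoeff b a * b ^ n.natAbs := by
  have hneg (m : ℤ) : ∑' T : ℤ, a ^ T.natAbs * b ^ (-m - T).natAbs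
      = ∑' T : ℤ, a ^ T.natAbs * b ^ (m - T).natAbs := by
    rw [← (Equiv.neg ℤ).tsum_eq]
    refine tsum_congr fun T => ?_
    simp only [Equiv.neg_apply, Int.natAbs_neg]
    rw [show -m - -T = -(m - T) by ring, Int.natAbs_neg]
  obtain ⟨m, rfl | rfl⟩ := Int.eq_nat_or_neg n
  · simpa using tsum_pow_natAbs_mul_pow_natAbs_sub_natCast ha hb hab m
  · simpa [hneg] using tsum_pow_natAbs_mul_pow_natAbs_sub_natCast ha hb hab m

lemma fiberSum_eq_tsum_removeNth {k : ℕ} {lam : Fin (k + 1) → 𝕜} (hlam : ∀ i, ‖lam i‖ < 1)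
    (i : Fin (k + 1)) (n : ℤ) :
    fiberSum lam n = ∑' T : ℤ, lam i ^ (n - T).natAbs * fiberSum (i.removeNth lam) T := by
  set F : (Fin k → ℤ) → 𝕜 := fun m =>
    lam i ^ (n - ∑ j, m j).natAbs * ∏ j, i.removeNth lam j ^ (m j).natAbs
  have hF : Summable F := by
    refine Summable.of_norm_bounded
      (summable_prod_norm_pow_natAbs (lam := i.removeNth lam) fun j => hlam _) fun m => ?_
    simp only [F, norm_mul, norm_prod, norm_pow]
    exact mul_le_of_le_one_left (by positivity) (pow_le_one₀ (norm_nonneg _) (hlam i).le)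
  have hunfold : fiberSum lam n = ∑' m, F m := by
    rw [fiberSum, ← (insertNthFiberEquiv i n).tsum_eq]
    refine tsum_congr fun m => ?_
    simp [insertNthFiberEquiv, F, Fin.prod_univ_succAbove _ i, Fin.removeNth_apply]
  rw [hunfold, ← (hF.hasSum.tsum_fiberwise fun m => ∑ j, m j).tsum_eq]
  refine tsum_congr fun T => ?_
  rw [fiberSum, ← tsum_mul_left]
  refine tsum_congr fun m => ?_
  have hm : ∑ j, m.1 j = T := m.2
  simp only [F, hm]

lemma fiberSum_eq_sum_update {k : ℕ} {lam : Fin (k + 1) → 𝕜} (hlam : ∀ i, ‖lam i‖ < 1)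
    (hinj : Function.Injective lam) (i : Fin (k + 1))
    (ih : ∀ T : ℤ, fiberSum (i.removeNth lam) T
      = ∑ j, fiberSumCoeff (i.removeNth lam) j * i.removeNth lam j ^ T.natAbs) (n : ℤ) :
    fiberSum lam n = ∑ l, Function.update (fiberSumCoeff lam) i
      (∑ j, fiberSumCoeff (i.removeNth lam) j * pairCoeff (lam i) (lam (i.succAbove j))) l
        * lam l ^ n.natAbs := by
  set lam' := i.removeNth lam
  calc fiberSum lam n
      = ∑' T : ℤ, ∑ j, fiberSumCoeff lam' j * (lam' j ^ T.natAbs * lam i ^ (n - T).natAbs) := by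
        rw [fiberSum_eq_tsum_removeNth hlam i n]
        refine tsum_congr fun T => ?_
        rw [ih, mul_sum]
        exact sum_congr rfl fun j _ => by ring
    _ = ∑ j, fiberSumCoeff lam' j * (pairCoeff (lam' j) (lam i) * lam' j ^ n.natAbs
          + pairCoeff (lam i) (lam' j) * lam i ^ n.natAbs) := by
        rw [Summable.tsum_finsetSum fun j _ =>
          (summable_pow_natAbs_mul_pow_natAbs_sub (a := lam' j) (hlam _) (hlam i) n).mul_left _]
        refine sum_congr rfl fun j _ => ?_
        rw [tsum_mul_left, tsum_pow_natAbs_mul_pow_natAbs_sub (a := lam' j) (hlam _) (hlam i)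
          (hinj.ne (i.succAbove_ne j)) n]
    _ = _ := by
        rw [Fin.sum_univ_succAbove _ i]
        simp only [Function.update_self, Function.update_of_ne (i.succAbove_ne _),
          fiberSumCoeff_succAbove, mul_add, sum_add_distrib, sum_mul]
        rw [add_comm]
        congr 1 <;> exact sum_congr rfl fun j _ => by simp only [lam', Fin.removeNth_apply]; ring

theorem fiberSum_eq_sum_fiberSumCoeff_mul_pow {k : ℕ} {lam : Fin (k + 1) → 𝕜}
    (hlam : ∀ i, ‖lam i‖ < 1) (hinj : Function.Injective lam) (n : ℤ) :
    fiberSum lam n = ∑ j, fiberSumCoeff lam j * lam j ^ n.natAbs := by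
  induction k generalizing n with
  | zero => simp [fiberSum_fin_one, fiberSumCoeff]
  | succ k ih =>
    have hrec (i : Fin (k + 2)) := fiberSum_eq_sum_update hlam hinj i
      (ih (fun _ => hlam _) (hinj.comp i.succAbove_right_injective))
    have h₀ := eq_of_forall_sum_update_mul_pow_eq hinj (zero_ne_one : (0 : Fin (k + 2)) ≠ 1)
      fun n => by simpa only [Int.natAbs_natCast] using (hrec 0 n).symm.trans (hrec 1 n)
    rw [hrec 0, h₀, Function.update_eq_self]

end NormedField

theorem stmt15_general (k : ℕ) (hk : 1 ≤ k) (lam : Fin k → ℂ)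
    (hlam : ∀ i, ‖lam i‖ < 1)
    (hdist : Function.Injective lam) :
    ∑ j, lam j ^ (k - 1) *
        ∏ l ∈ Finset.univ.erase j,
          (1 - lam l ^ 2) / ((lam j - lam l) * (1 - lam j * lam l))
      = ∑' m : {f : Fin k → ℤ // ∑ i, f i = 0},
          ∏ i, lam i ^ ((m : Fin k → ℤ) i).natAbs := by
  obtain ⟨k, rfl⟩ := Nat.exists_eq_add_of_le' hk
  have h := fiberSum_eq_sum_fiberSumCoeff_mul_pow hlam hdist 0
  simp only [Int.natAbs_zero, pow_zero, mul_one, fiberSumCoeff_eq] at h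
  exact h.symm

/-- The coefficients C_j sum to B_0:
∑_j λ_j^{k-1} ∏_{ℓ≠j} (1-λ_ℓ²)/((λ_j-λ_ℓ)(1-λ_jλ_ℓ))
  = ∑_{m₁+⋯+m_k=0} ∏_i λ_i^{|m_i|}. -/
theorem stmt15 (k : ℕ) (hk : 1 ≤ k) (lam : Fin k → ℂ)
    (hlam : ∀ i, ‖lam i‖ < 1) (hne : ∀ i, lam i ≠ 0)
    (hdist : Function.Injective lam) :
    ∑ j, lam j ^ (k - 1) *
        ∏ l ∈ Finset.univ.erase j,
          (1 - lam l ^ 2) / ((lam j - lam l) * (1 - lam j * lam l))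
      = ∑' m : {f : Fin k → ℤ // ∑ i, f i = 0},
          ∏ i, lam i ^ ((m : Fin k → ℤ) i).natAbs :=
  stmt15_general k hk lam hlam hdist
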